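/- (Increase dimension.) Suppose that A, B, C form a 3-phase s₁ × ⋯ × s_r Golay array triad. Define the 3 × s₁ × ⋯ × s_r arrays U, V, W by stacking: U = [A; B; C], V = [A; ωB; ω²C], W = [A; ω²B; ωC], where for arrays X, Y, Z the stacked array [X; Y; Z] is the 3 × s₁ × ⋯ × s_r array D with D(0, i₁,…,i_r) = X(i₁,…,i_r), D(1, i₁,…,i_r) = Y(i₁,…,i_r), D(2, i₁,…,i_r) = Z(i₁,…,i_r), and D(i, i₁,…,i_r) = 0 for i ∉ {0,1,2}. Then U, V, W form a 3-phase 3 × s₁ × ⋯ × s_r Golay array triad. -/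

import Mathlib

open scoped BigOperators

/-- `ω = e^{2πi/3}`, a primitive cube root of unity. -/
noncomputable def ω : ℂ := Complex.exp (2 * Real.pi * Complex.I / 3)

/-- Aperiodic autocorrelation function of an `r`-dimensional array:
`C_A(u) = Σ_{i ∈ ℤ^r} A(i) conj(A(i+u))`. -/
noncomputable def aperCorrArr {r : ℕ} (A : (Fin r → ℤ) → ℂ) (u : Fin r → ℤ) : ℂ :=
  ∑' i : Fin r → ℤ, A i * (starRingEnd ℂ) (A (i + u))

/-- A 3-phase `s₁ × ⋯ × s_r` array: vanishes whenever some index is out of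
range, and its entries inside the index range lie in `{1, ω, ω²}`. -/
def IsThreePhaseArr (r : ℕ) (s : Fin r → ℕ) (A : (Fin r → ℤ) → ℂ) : Prop :=
  (∀ i : Fin r → ℤ, (∃ k, i k < 0 ∨ (s k : ℤ) ≤ i k) → A i = 0) ∧
    ∀ i : Fin r → ℤ, (∀ k, 0 ≤ i k ∧ i k < (s k : ℤ)) →
      A i ∈ ({1, ω, ω ^ 2} : Set ℂ)

/-- Three 3-phase `s₁ × ⋯ × s_r` arrays forming a 3-phase Golay array triad. -/
def GolayArrTriad (r : ℕ) (s : Fin r → ℕ) (A B C : (Fin r → ℤ) → ℂ) : Prop :=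
  IsThreePhaseArr r s A ∧ IsThreePhaseArr r s B ∧ IsThreePhaseArr r s C ∧
    ∀ u : Fin r → ℤ, u ≠ 0 →
      aperCorrArr A u + aperCorrArr B u + aperCorrArr C u = 0

/-- A `t × s₁ × ⋯ × s_r` array (with the first dimension displayed
explicitly): vanishes whenever some index is out of range. -/
def IsArr1R (t : ℕ) {r : ℕ} (s : Fin r → ℕ) (B : ℤ → (Fin r → ℤ) → ℂ) : Prop :=
  ∀ (i₀ : ℤ) (i : Fin r → ℤ),
    ((i₀ < 0 ∨ (t : ℤ) ≤ i₀) ∨ ∃ k, i k < 0 ∨ (s k : ℤ) ≤ i k) → B i₀ i = 0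

/-- A 3-phase `t × s₁ × ⋯ × s_r` array. -/
def IsThreePhase1R (t : ℕ) {r : ℕ} (s : Fin r → ℕ)
    (B : ℤ → (Fin r → ℤ) → ℂ) : Prop :=
  IsArr1R t s B ∧
    ∀ (i₀ : ℤ) (i : Fin r → ℤ), 0 ≤ i₀ → i₀ < (t : ℤ) →
      (∀ k, 0 ≤ i k ∧ i k < (s k : ℤ)) → B i₀ i ∈ ({1, ω, ω ^ 2} : Set ℂ)

/-- Aperiodic autocorrelation of an array with one explicit leading
dimension. -/
noncomputable def aperCorr1R {r : ℕ} (B : ℤ → (Fin r → ℤ) → ℂ)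
    (u₀ : ℤ) (u : Fin r → ℤ) : ℂ :=
  ∑' p : ℤ × (Fin r → ℤ),
    B p.1 p.2 * (starRingEnd ℂ) (B (p.1 + u₀) (p.2 + u))

/-- Three 3-phase `t × s₁ × ⋯ × s_r` arrays forming a 3-phase Golay array
triad. -/
def GolayTriad1R (t : ℕ) {r : ℕ} (s : Fin r → ℕ)
    (A B C : ℤ → (Fin r → ℤ) → ℂ) : Prop :=
  IsThreePhase1R t s A ∧ IsThreePhase1R t s B ∧ IsThreePhase1R t s C ∧
    ∀ (u₀ : ℤ) (u : Fin r → ℤ), ¬ (u₀ = 0 ∧ u = 0) →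
      aperCorr1R A u₀ u + aperCorr1R B u₀ u + aperCorr1R C u₀ u = 0

/-- The stacked array `[X; Y; Z]`: a `3 × s₁ × ⋯ × s_r` array whose rows
`0, 1, 2` are `X, Y, Z`, and zero elsewhere. -/
def stack3 {r : ℕ} (X Y Z : (Fin r → ℤ) → ℂ) : ℤ → (Fin r → ℤ) → ℂ :=
  fun i₀ i => if i₀ = 0 then X i else if i₀ = 1 then Y i else if i₀ = 2 then Z i else 0

/-! Row `j` of `V` and of `W` is row `j` of `U` multiplied by `ω ^ j` and by `(ω ^ 2) ^ j`, so
at a shift `(u₀, u)` the autocorrelations of `V` and `W` are those of `U` multiplied by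
`ω ^ (-u₀)` and `(ω ^ 2) ^ (-u₀)`. The sum `1 + ω ^ (-u₀) + ω ^ (-2 u₀)` vanishes unless
`3 ∣ u₀`; a nonzero multiple of `3` shifts the three rows of `U` off each other, and at `u₀ = 0`
the autocorrelation of `U` is `C_A + C_B + C_C`. -/

theorem isPrimitiveRoot_ω : IsPrimitiveRoot ω 3 := by
  simpa [ω] using Complex.isPrimitiveRoot_exp 3 (by norm_num)

theorem norm_ω : ‖ω‖ = 1 := isPrimitiveRoot_ω.norm'_eq_one (by norm_num)

theorem mem_cubeRoots_iff {x : ℂ} : x ∈ ({1, ω, ω ^ 2} : Set ℂ) ↔ x ^ 3 = 1 := by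
  refine ⟨?_, fun hx => ?_⟩
  · have h3 := isPrimitiveRoot_ω.pow_eq_one
    rintro (rfl | rfl | rfl)
    exacts [one_pow 3, h3, by rw [← pow_mul, mul_comm, pow_mul, h3, one_pow]]
  · obtain ⟨i, hi, rfl⟩ := isPrimitiveRoot_ω.eq_pow_of_pow_eq_one hx
    interval_cases i <;> simp

theorem mul_mem_cubeRoots {x y : ℂ} (hx : x ∈ ({1, ω, ω ^ 2} : Set ℂ))
    (hy : y ∈ ({1, ω, ω ^ 2} : Set ℂ)) : x * y ∈ ({1, ω, ω ^ 2} : Set ℂ) := by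
  rw [mem_cubeRoots_iff] at *
  rw [mul_pow, hx, hy, one_mul]

theorem one_add_add_sq_eq_zero {K : Type*} [Field K] {z : K} (h3 : z ^ 3 = 1) (h1 : z ≠ 1) :
    1 + z + z ^ 2 = 0 := by
  have h : (z - 1) * (1 + z + z ^ 2) = 0 := by linear_combination h3
  exact (mul_eq_zero.mp h).resolve_left (sub_ne_zero.mpr h1)

theorem one_add_ω_zpow_add_ω_sq_zpow {n : ℤ} (hn : ¬ (3 : ℤ) ∣ n) :
    1 + ω ^ n + (ω ^ 2) ^ n = 0 := by
  have hsq : (ω ^ 2) ^ n = (ω ^ n) ^ 2 := by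
    rw [← zpow_natCast, ← zpow_natCast, ← zpow_mul, ← zpow_mul, mul_comm]
  rw [hsq]
  refine one_add_add_sq_eq_zero ?_ ?_
  · rw [← zpow_natCast, ← zpow_mul, mul_comm, zpow_mul]
    simp [isPrimitiveRoot_ω.pow_eq_one]
  · rwa [Ne, isPrimitiveRoot_ω.zpow_eq_one_iff_dvd]

section Arrays

variable {r : ℕ} {s : Fin r → ℕ}

noncomputable def indexBox (s : Fin r → ℕ) : Finset (Fin r → ℤ) :=
  Fintype.piFinset fun k => Finset.Ico (0 : ℤ) (s k)

theorem IsThreePhaseArr.const_mul {A : (Fin r → ℤ) → ℂ} (hA : IsThreePhaseArr r s A) {c : ℂ}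
    (hc : c ∈ ({1, ω, ω ^ 2} : Set ℂ)) : IsThreePhaseArr r s (fun i => c * A i) :=
  ⟨fun i hi => by simp only [hA.1 i hi, mul_zero], fun i hi => mul_mem_cubeRoots hc (hA.2 i hi)⟩

theorem isThreePhase1R_stack3 {X Y Z : (Fin r → ℤ) → ℂ}
    (hX : IsThreePhaseArr r s X) (hY : IsThreePhaseArr r s Y)
    (hZ : IsThreePhaseArr r s Z) : IsThreePhase1R 3 s (stack3 X Y Z) := by
  constructor
  · rintro i₀ i (hi₀ | hi)
    · have : i₀ ≠ 0 ∧ i₀ ≠ 1 ∧ i₀ ≠ 2 := by omega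
      simp [stack3, this]
    · simp only [stack3]
      split_ifs
      exacts [hX.1 i hi, hY.1 i hi, hZ.1 i hi, rfl]
  · intro i₀ i h0 h3 hi
    obtain rfl | rfl | rfl : i₀ = 0 ∨ i₀ = 1 ∨ i₀ = 2 := by omega
    exacts [hX.2 i hi, hY.2 i hi, hZ.2 i hi]

theorem stack3_mul_zpow (X Y Z : (Fin r → ℤ) → ℂ) {ζ η : ℂ} (hη : ζ ^ 2 = η) :
    stack3 X (fun i => ζ * Y i) (fun i => η * Z i) = fun j i => ζ ^ j * stack3 X Y Z j i := by
  ext j i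
  simp only [stack3]
  split_ifs <;> simp_all

theorem aperCorr1R_zpow_mul (D : ℤ → (Fin r → ℤ) → ℂ) {ζ : ℂ} (hζ : ‖ζ‖ = 1) (u₀ : ℤ)
    (u : Fin r → ℤ) :
    aperCorr1R (fun j i => ζ ^ j * D j i) u₀ u = ζ ^ (-u₀) * aperCorr1R D u₀ u := by
  have hζ₀ : ζ ≠ 0 := norm_ne_zero_iff.mp (by rw [hζ]; exact one_ne_zero)
  unfold aperCorr1R
  rw [← tsum_mul_left]
  congr 1
  ext ⟨j, i⟩
  have hphase : ζ ^ j * (starRingEnd ℂ) (ζ ^ (j + u₀)) = ζ ^ (-u₀) := by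
    rw [map_zpow₀, ← Complex.inv_eq_conj hζ, inv_zpow', ← zpow_add₀ hζ₀]
    ring_nf
  simp only [map_mul]
  linear_combination D j i * (starRingEnd ℂ) (D (j + u₀) (i + u)) * hphase

theorem IsArr1R.eq_zero_of_notMem {t : ℕ} {D : ℤ → (Fin r → ℤ) → ℂ} (hD : IsArr1R t s D)
    {j : ℤ} {i : Fin r → ℤ} (h : (j, i) ∉ Finset.Ico 0 (t : ℤ) ×ˢ indexBox s) : D j i = 0 := by
  simp only [Finset.mem_product, Finset.mem_Ico, indexBox, Fintype.mem_piFinset, not_and_or,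
    not_forall, not_le, not_lt] at h
  exact hD j i h

theorem aperCorr1R_eq_zero_of_le_abs {t : ℕ} {D : ℤ → (Fin r → ℤ) → ℂ} (hD : IsArr1R t s D)
    {u₀ : ℤ} (hu₀ : (t : ℤ) ≤ |u₀|) (u : Fin r → ℤ) : aperCorr1R D u₀ u = 0 := by
  rw [aperCorr1R, ← tsum_zero]
  congr 1
  ext ⟨j, i⟩
  have hu₀' := le_abs'.mp hu₀
  by_cases hj : 0 ≤ j ∧ j < t
  · rw [hD (j + u₀) (i + u) (.inl (by omega)), map_zero, mul_zero]
  · rw [hD j i (.inl (by omega)), zero_mul]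

theorem aperCorr1R_zero_eq_tsum {t : ℕ} {D : ℤ → (Fin r → ℤ) → ℂ} (hD : IsArr1R t s D)
    (u : Fin r → ℤ) : aperCorr1R D 0 u = ∑' j, aperCorrArr (D j) u := by
  have hsum : Summable fun p : ℤ × (Fin r → ℤ) => D p.1 p.2 * (starRingEnd ℂ) (D p.1 (p.2 + u)) :=
    summable_of_ne_finset_zero fun p hp => by rw [hD.eq_zero_of_notMem hp, zero_mul]
  simpa [aperCorr1R, aperCorrArr] using hsum.tsum_prod

theorem tsum_aperCorrArr_stack3 (X Y Z : (Fin r → ℤ) → ℂ) (u : Fin r → ℤ) :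
    ∑' j, aperCorrArr (stack3 X Y Z j) u = aperCorrArr X u + aperCorrArr Y u + aperCorrArr Z u := by
  rw [tsum_eq_sum (s := {0, 1, 2})]
  · rw [Finset.sum_insert (by decide), Finset.sum_insert (by decide), Finset.sum_singleton,
      ← add_assoc]
    rfl
  · intro j hj
    simp_all [stack3, aperCorrArr]

end Arrays

/-- (Increase dimension.) If `A, B, C` form a 3-phase `s₁ × ⋯ × s_r` Golay
array triad, then `U = [A; B; C]`, `V = [A; ωB; ω²C]`, `W = [A; ω²B; ωC]`
form a 3-phase `3 × s₁ × ⋯ × s_r` Golay array triad. -/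
theorem increase_dimension (r : ℕ) (s : Fin r → ℕ) (A B C : (Fin r → ℤ) → ℂ)
    (h : GolayArrTriad r s A B C) :
    GolayTriad1R 3 s (stack3 A B C)
      (stack3 A (fun i => ω * B i) (fun i => ω ^ 2 * C i))
      (stack3 A (fun i => ω ^ 2 * B i) (fun i => ω * C i)) := by
  obtain ⟨hA, hB, hC, hcorr⟩ := h
  have hU := isThreePhase1R_stack3 hA hB hC
  have hω : ω ∈ ({1, ω, ω ^ 2} : Set ℂ) := by simp
  have hω2 : ω ^ 2 ∈ ({1, ω, ω ^ 2} : Set ℂ) := by simp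
  refine ⟨hU, isThreePhase1R_stack3 hA (hB.const_mul hω) (hC.const_mul hω2),
    isThreePhase1R_stack3 hA (hB.const_mul hω2) (hC.const_mul hω), fun u₀ u hne => ?_⟩
  have hω4 : (ω ^ 2) ^ 2 = ω := by
    rw [← pow_mul, show 2 * 2 = 3 + 1 by rfl, pow_succ, isPrimitiveRoot_ω.pow_eq_one, one_mul]
  rw [stack3_mul_zpow A B C rfl, stack3_mul_zpow A B C hω4,
    aperCorr1R_zpow_mul _ norm_ω, aperCorr1R_zpow_mul _ (by rw [norm_pow, norm_ω, one_pow])]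
  by_cases h3 : (3 : ℤ) ∣ u₀
  · rcases eq_or_ne u₀ 0 with rfl | hu₀
    · have hu : u ≠ 0 := fun hu => hne ⟨rfl, hu⟩
      rw [aperCorr1R_zero_eq_tsum hU.1, tsum_aperCorrArr_stack3, hcorr u hu]
      ring
    · have h3_le : (3 : ℤ) ≤ |u₀| := Int.le_of_dvd (abs_pos.mpr hu₀) ((dvd_abs _ _).mpr h3)
      rw [aperCorr1R_eq_zero_of_le_abs hU.1 h3_le]
      ring
  · linear_combination aperCorr1R (stack3 A B C) u₀ u *
      one_add_ω_zpow_add_ω_sq_zpow (mt dvd_neg.mp h3)
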